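/- arXiv:1004.1734 — 5 statements merged into one kernel-verified Lean document; each statement's English description precedes it below -/
import Mathlib

section
/- The function U defined by U(r) = (r²/(4π)) ∫₀¹ (z² - z⁴/3)/(1 + r²(1-z²)/4) dz for r ≥ 0 satisfies, for all r ≥ 0, the two-sided bound (2/(15π))(1 + log√(1+r²)) ≤ 1 + U(r) ≤ 1 + (2/(3π)) log√(1+r²). -/
open Real

/-- The Uehling multiplier `U`. -/
noncomputable def U (r : ℝ) : ℝ :=
  r ^ 2 / (4 * π) * ∫ z in (0:ℝ)..1, (z ^ 2 - z ^ 4 / 3) / (1 + r ^ 2 * (1 - z ^ 2) / 4)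

set_option maxHeartbeats 1600000 in
theorem uehling_two_sided_bound (r : ℝ) (hr : 0 ≤ r) :
    2 / (15 * π) * (1 + Real.log (Real.sqrt (1 + r ^ 2))) ≤ 1 + U r ∧
    1 + U r ≤ 1 + 2 / (3 * π) * Real.log (Real.sqrt (1 + r ^ 2)) := by
  have hpi : (3:ℝ) < π := Real.pi_gt_three
  have hpi0 : (0:ℝ) < π := by linarith
  have hls : Real.log (Real.sqrt (1 + r ^ 2)) = Real.log (1 + r ^ 2) / 2 :=
    Real.log_sqrt (by positivity)
  rcases eq_or_lt_of_le hr with h0 | h0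
  · -- r = 0
    have hU : U r = 0 := by simp [U, ← h0]
    rw [hU, ← h0]
    norm_num [Real.log_one]
    rw [div_le_one (by positivity)]
    linarith
  · -- r > 0
    have hr2 : (0:ℝ) < r ^ 2 := by positivity
    have hr2' : r ^ 2 ≠ 0 := ne_of_gt hr2
    set D : ℝ → ℝ := fun z => 1 + r ^ 2 * (1 - z ^ 2) / 4 with hD
    have hden : ∀ z ∈ Set.Icc (0:ℝ) 1, 0 < D z := by
      intro z hz
      have h1 : z ^ 2 ≤ 1 := by nlinarith [hz.1, hz.2]
      have : 0 ≤ r ^ 2 * (1 - z ^ 2) := by nlinarith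
      simp only [hD]; linarith
    have hDcont : Continuous D := by fun_prop
    have hint : ∀ g : ℝ → ℝ, Continuous g →
        IntervalIntegrable (fun z => g z / D z) MeasureTheory.volume 0 1 := by
      intro g hg
      apply ContinuousOn.intervalIntegrable
      apply ContinuousOn.div hg.continuousOn hDcont.continuousOn
      intro z hz
      exact ne_of_gt (hden z (by rwa [Set.uIcc_of_le zero_le_one] at hz))
    -- derivative of the inner denominator
    have hDderiv : ∀ z : ℝ, HasDerivAt D (r ^ 2 * (-(2 * z)) / 4) z := by
      intro z
      have h1 : HasDerivAt (fun z : ℝ => z ^ 2) (2 * z) z := by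
        simpa using hasDerivAt_pow 2 z
      have h2 := (((h1.const_sub 1).const_mul (r ^ 2)).div_const 4).const_add 1
      convert h2 using 1
    -- the two antiderivatives
    have hG : ∀ z ∈ Set.uIcc (0:ℝ) 1,
        HasDerivAt (fun z => -(2 / r ^ 2) * Real.log (D z)) ((2/3 * z) / D z / (2/3)) z := by
      intro z hz
      have hz' : 0 < D z := hden z (by rwa [Set.uIcc_of_le zero_le_one] at hz)
      have h2 := ((hDderiv z).log (ne_of_gt hz')).const_mul (-(2 / r ^ 2))
      refine h2.congr_deriv ?_
      field_simp
      ring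
    have hF : ∀ z ∈ Set.uIcc (0:ℝ) 1,
        HasDerivAt (fun z => -(2 / r ^ 2) * (z ^ 2 + (4 + r ^ 2) / r ^ 2 * Real.log (D z)))
          ((2/3 * z ^ 3) / D z / (2/3)) z := by
      intro z hz
      have hz' : 0 < D z := hden z (by rwa [Set.uIcc_of_le zero_le_one] at hz)
      have h1 : HasDerivAt (fun z : ℝ => z ^ 2) (2 * z) z := by
        simpa using hasDerivAt_pow 2 z
      have h2 := (h1.add (((hDderiv z).log (ne_of_gt hz')).const_mul
        ((4 + r ^ 2) / r ^ 2))).const_mul (-(2 / r ^ 2))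
      refine h2.congr_deriv ?_
      have hd : D z ≠ 0 := ne_of_gt hz'
      field_simp
      simp only [hD]
      ring
    -- values of the bounding integrals
    have hI1 : ∫ z in (0:ℝ)..1, (2/3 * z) / D z
        = (2/3) * ((2 / r ^ 2) * Real.log (1 + r ^ 2 / 4)) := by
      have hinteg : IntervalIntegrable (fun z => (2/3 * z) / D z / (2/3))
          MeasureTheory.volume 0 1 := (hint (fun z => 2/3 * z) (by fun_prop)).div_const _
      have hval := intervalIntegral.integral_eq_sub_of_hasDerivAt hG hinteg
      have hD1 : D 1 = 1 := by simp [hD]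
      have hD0 : D 0 = 1 + r ^ 2 / 4 := by simp [hD]
      rw [hD1, hD0, Real.log_one, intervalIntegral.integral_div] at hval
      rw [div_eq_iff (show (2:ℝ)/3 ≠ 0 by norm_num)] at hval
      rw [hval]; ring
    have hI3 : ∫ z in (0:ℝ)..1, (2/3 * z ^ 3) / D z
        = (2/3) * ((2 / r ^ 2) * ((4 + r ^ 2) / r ^ 2 * Real.log (1 + r ^ 2 / 4) - 1)) := by
      have hinteg : IntervalIntegrable (fun z => (2/3 * z ^ 3) / D z / (2/3))
          MeasureTheory.volume 0 1 := (hint (fun z => 2/3 * z ^ 3) (by fun_prop)).div_const _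
      have hval := intervalIntegral.integral_eq_sub_of_hasDerivAt hF hinteg
      have hD1 : D 1 = 1 := by simp [hD]
      have hD0 : D 0 = 1 + r ^ 2 / 4 := by simp [hD]
      rw [hD1, hD0, Real.log_one, intervalIntegral.integral_div] at hval
      rw [div_eq_iff (show (2:ℝ)/3 ≠ 0 by norm_num)] at hval
      rw [hval]; ring
    -- pointwise comparison
    have hcomp_up : ∫ z in (0:ℝ)..1, (z ^ 2 - z ^ 4 / 3) / D z
        ≤ ∫ z in (0:ℝ)..1, (2/3 * z) / D z := by
      apply intervalIntegral.integral_mono_on zero_le_one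
        (hint _ (by fun_prop)) (hint _ (by fun_prop))
      intro z hz
      have hd := hden z hz
      apply (div_le_div_iff_of_pos_right hd).mpr
      nlinarith [mul_nonneg (mul_nonneg hz.1 (sq_nonneg (1 - z)))
        (show (0:ℝ) ≤ z + 2 by linarith [hz.1])]
    have hcomp_lo : ∫ z in (0:ℝ)..1, (2/3 * z ^ 3) / D z
        ≤ ∫ z in (0:ℝ)..1, (z ^ 2 - z ^ 4 / 3) / D z := by
      apply intervalIntegral.integral_mono_on zero_le_one
        (hint _ (by fun_prop)) (hint _ (by fun_prop))
      intro z hz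
      have hd := hden z hz
      apply (div_le_div_iff_of_pos_right hd).mpr
      nlinarith [mul_nonneg (mul_nonneg (sq_nonneg z)
        (show (0:ℝ) ≤ 1 - z by linarith [hz.2]))
        (show (0:ℝ) ≤ 3 + z by linarith [hz.1])]
    -- abbreviations
    set L : ℝ := Real.log (1 + r ^ 2 / 4) with hL
    have hL0 : 0 ≤ L := Real.log_nonneg (by nlinarith)
    have hL4 : Real.log (1 + r ^ 2) ≤ L + 3 := by
      have h1 : Real.log (1 + r ^ 2) ≤ Real.log (4 * (1 + r ^ 2 / 4)) := by
        apply Real.log_le_log (by positivity)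
        nlinarith
      have h2 : Real.log (4 * (1 + r ^ 2 / 4)) = Real.log 4 + L := by
        rw [Real.log_mul (by norm_num) (by positivity)]
      have h3 : Real.log 4 ≤ 3 := by
        have := Real.log_le_sub_one_of_pos (show (0:ℝ) < 4 by norm_num)
        linarith
      linarith
    have hL4' : 0 ≤ Real.log (1 + r ^ 2) := Real.log_nonneg (by nlinarith)
    -- bounds on U
    have hUdef : U r = r ^ 2 / (4 * π) * ∫ z in (0:ℝ)..1, (z ^ 2 - z ^ 4 / 3) / D z := rfl
    have hUup : U r ≤ 1 / (3 * π) * L := by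
      rw [hUdef]
      have h := mul_le_mul_of_nonneg_left (hcomp_up.trans_eq hI1)
        (show (0:ℝ) ≤ r ^ 2 / (4 * π) by positivity)
      have heq : r ^ 2 / (4 * π) * ((2/3) * ((2 / r ^ 2) * L)) = 1 / (3 * π) * L := by
        field_simp
        ring
      calc r ^ 2 / (4 * π) * ∫ z in (0:ℝ)..1, (z ^ 2 - z ^ 4 / 3) / D z
          ≤ r ^ 2 / (4 * π) * ((2/3) * ((2 / r ^ 2) * L)) := h
        _ = 1 / (3 * π) * L := heq
    have hUlo : 1 / (3 * π) * ((4 + r ^ 2) / r ^ 2 * L - 1) ≤ U r := by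
      rw [hUdef]
      have h := mul_le_mul_of_nonneg_left (hI3.symm.trans_le hcomp_lo)
        (show (0:ℝ) ≤ r ^ 2 / (4 * π) by positivity)
      have heq : r ^ 2 / (4 * π) * ((2/3) * ((2 / r ^ 2) * ((4 + r ^ 2) / r ^ 2 * L - 1)))
          = 1 / (3 * π) * ((4 + r ^ 2) / r ^ 2 * L - 1) := by
        field_simp
        ring
      calc 1 / (3 * π) * ((4 + r ^ 2) / r ^ 2 * L - 1)
          = r ^ 2 / (4 * π) * ((2/3) * ((2 / r ^ 2) * ((4 + r ^ 2) / r ^ 2 * L - 1))) := heq.symm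
        _ ≤ r ^ 2 / (4 * π) * ∫ z in (0:ℝ)..1, (z ^ 2 - z ^ 4 / 3) / D z := h
    have hXL : L ≤ (4 + r ^ 2) / r ^ 2 * L := by
      have h1 : (1:ℝ) ≤ (4 + r ^ 2) / r ^ 2 := by
        rw [le_div_iff₀ hr2]; nlinarith
      nlinarith
    constructor
    · rw [hls]
      have key : 2 / (15 * π) * (1 + Real.log (1 + r ^ 2) / 2)
          ≤ 1 + 1 / (3 * π) * ((4 + r ^ 2) / r ^ 2 * L - 1) := by
        set X : ℝ := (4 + r ^ 2) / r ^ 2 * L with hX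
        have h1 : 2 / (15 * π) * (1 + Real.log (1 + r ^ 2) / 2)
            = (2 + Real.log (1 + r ^ 2)) / (15 * π) := by field_simp
        have h2 : 1 + 1 / (3 * π) * (X - 1) = (15 * π + 5 * (X - 1)) / (15 * π) := by
          field_simp; ring
        rw [h1, h2]
        apply (div_le_div_iff_of_pos_right (show (0:ℝ) < 15 * π by positivity)).mpr
        linarith [hXL, hL4, hL0]
      exact key.trans (by linarith [hUlo])
    · rw [hls]
      have h1 : 1 / (3 * π) * L ≤ 2 / (3 * π) * (Real.log (1 + r ^ 2) / 2) := by
        have hLle : L ≤ Real.log (1 + r ^ 2) := by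
          apply Real.log_le_log (by positivity)
          nlinarith
        have : 2 / (3 * π) * (Real.log (1 + r ^ 2) / 2) = 1 / (3 * π) * Real.log (1 + r ^ 2) := by
          ring
        rw [this]
        apply mul_le_mul_of_nonneg_left hLle (by positivity)
      linarith [hUup]
end

section
/- The function U defined by U(r) = (r²/(4π)) ∫₀¹ (z² - z⁴/3)/(1 + r²(1-z²)/4) dz is nonnegative and nondecreasing on [0,∞), and satisfies U(r) ≤ (1/(3π)) log(1 + r²/4) for all r ≥ 0. -/
open Real

lemma denom_pos (r z : ℝ) (hz : z ∈ Set.Icc (0:ℝ) 1) :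
    0 < 1 + r ^ 2 * (1 - z ^ 2) / 4 := by
  obtain ⟨h0, h1⟩ := hz
  nlinarith [sq_nonneg r, mul_nonneg (sq_nonneg r) (by nlinarith : (0:ℝ) ≤ 1 - z ^ 2)]

lemma intble (r : ℝ) : IntervalIntegrable
    (fun z : ℝ => (z ^ 2 - z ^ 4 / 3) / (1 + r ^ 2 * (1 - z ^ 2) / 4))
    MeasureTheory.volume 0 1 := by
  apply ContinuousOn.intervalIntegrable
  rw [Set.uIcc_of_le zero_le_one]
  exact ContinuousOn.div (by fun_prop) (by fun_prop) (fun z hz => (denom_pos r z hz).ne')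

lemma num_nonneg {z : ℝ} (hz : z ∈ Set.Icc (0:ℝ) 1) : 0 ≤ z ^ 2 - z ^ 4 / 3 := by
  obtain ⟨h0, h1⟩ := hz
  nlinarith [mul_nonneg (mul_nonneg h0 h0) (by nlinarith : (0:ℝ) ≤ 1 - z ^ 2)]

lemma key_integral (a : ℝ) (ha : 0 ≤ a) :
    ∫ z in (0:ℝ)..1, 2 * z * a / (1 + a * (1 - z ^ 2)) = Real.log (1 + a) := by
  have h : ∀ z ∈ Set.uIcc (0:ℝ) 1,
      HasDerivAt (fun z : ℝ => -Real.log (1 + a * (1 - z ^ 2)))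
        (2 * z * a / (1 + a * (1 - z ^ 2))) z := by
    intro z hz
    rw [Set.uIcc_of_le zero_le_one] at hz
    have hd : 0 < 1 + a * (1 - z ^ 2) := by
      obtain ⟨h0, h1⟩ := hz
      nlinarith [mul_nonneg ha (by nlinarith : (0:ℝ) ≤ 1 - z ^ 2)]
    have hg : HasDerivAt (fun z : ℝ => 1 + a * (1 - z ^ 2)) (a * -(2 * z)) z := by
      have h := (((hasDerivAt_pow 2 z).const_sub 1).const_mul a).const_add 1
      refine h.congr_deriv ?_
      push_cast; ring
    have := (hg.log hd.ne').neg
    refine this.congr_deriv ?_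
    field_simp
  rw [intervalIntegral.integral_eq_sub_of_hasDerivAt h ?_]
  · simp
  · apply ContinuousOn.intervalIntegrable
    rw [Set.uIcc_of_le zero_le_one]
    apply ContinuousOn.div (by fun_prop) (by fun_prop)
    intro z hz
    obtain ⟨h0, h1⟩ := hz
    nlinarith [mul_nonneg ha (by nlinarith : (0:ℝ) ≤ 1 - z ^ 2)]

theorem uehling_nonneg_monotone_log_bound :
    (∀ r : ℝ, 0 ≤ r → 0 ≤ U r) ∧
    MonotoneOn U (Set.Ici (0:ℝ)) ∧
    (∀ r : ℝ, 0 ≤ r → U r ≤ 1 / (3 * π) * Real.log (1 + r ^ 2 / 4)) := by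
  have hπ : (0:ℝ) < π := Real.pi_pos
  refine ⟨?_, ?_, ?_⟩
  · intro r hr
    apply mul_nonneg (by positivity)
    apply intervalIntegral.integral_nonneg zero_le_one
    intro z hz
    exact div_nonneg (num_nonneg hz) (denom_pos r z hz).le
  · intro r hr s hs hrs
    simp only [Set.mem_Ici] at hr hs
    unfold U
    rw [← intervalIntegral.integral_const_mul, ← intervalIntegral.integral_const_mul]
    apply intervalIntegral.integral_mono_on zero_le_one
    · exact (intble r).const_mul _
    · exact (intble s).const_mul _
    · intro z hz
      have hdr := denom_pos r z hz
      have hds := denom_pos s z hz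
      have hN := num_nonneg hz
      have h1 : r ^ 2 / (1 + r ^ 2 * (1 - z ^ 2) / 4) ≤ s ^ 2 / (1 + s ^ 2 * (1 - z ^ 2) / 4) := by
        rw [div_le_div_iff₀ hdr hds]
        nlinarith [mul_nonneg (mul_nonneg hr hs) (mul_nonneg hr (by nlinarith [hz.1, hz.2] : (0:ℝ) ≤ 1 - z^2))]
      calc r ^ 2 / (4 * π) * ((z ^ 2 - z ^ 4 / 3) / (1 + r ^ 2 * (1 - z ^ 2) / 4))
          = (z ^ 2 - z ^ 4 / 3) / (4 * π) * (r ^ 2 / (1 + r ^ 2 * (1 - z ^ 2) / 4)) := by ring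
        _ ≤ (z ^ 2 - z ^ 4 / 3) / (4 * π) * (s ^ 2 / (1 + s ^ 2 * (1 - z ^ 2) / 4)) :=
            mul_le_mul_of_nonneg_left h1 (by positivity)
        _ = s ^ 2 / (4 * π) * ((z ^ 2 - z ^ 4 / 3) / (1 + s ^ 2 * (1 - z ^ 2) / 4)) := by ring
  · intro r hr
    rcases eq_or_lt_of_le hr with h0 | h0
    · subst h0
      simp [U]
    have hr2 : (0:ℝ) < r ^ 2 := by positivity
    have hmono : (∫ z in (0:ℝ)..1, (z ^ 2 - z ^ 4 / 3) / (1 + r ^ 2 * (1 - z ^ 2) / 4))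
        ≤ ∫ z in (0:ℝ)..1, (2 * z / 3) / (1 + r ^ 2 * (1 - z ^ 2) / 4) := by
      apply intervalIntegral.integral_mono_on zero_le_one (intble r)
      · apply ContinuousOn.intervalIntegrable
        rw [Set.uIcc_of_le zero_le_one]
        exact ContinuousOn.div (by fun_prop) (by fun_prop) (fun z hz => (denom_pos r z hz).ne')
      · intro z hz
        have hd := denom_pos r z hz
        rw [div_le_div_iff₀ hd hd]
        obtain ⟨hz0, hz1⟩ := hz
        have hnum : z ^ 2 - z ^ 4 / 3 ≤ 2 * z / 3 := by
          nlinarith [mul_nonneg hz0 (mul_nonneg (sq_nonneg (1 - z)) (by linarith : (0:ℝ) ≤ z + 2))]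
        nlinarith
    have heq : (∫ z in (0:ℝ)..1, (2 * z / 3) / (1 + r ^ 2 * (1 - z ^ 2) / 4))
        = 4 / (3 * r ^ 2) * Real.log (1 + r ^ 2 / 4) := by
      rw [← key_integral (r ^ 2 / 4) (by positivity), ← intervalIntegral.integral_const_mul]
      apply intervalIntegral.integral_congr
      intro z hz
      have hden : (1:ℝ) + r ^ 2 / 4 * (1 - z ^ 2) = 1 + r ^ 2 * (1 - z ^ 2) / 4 := by ring
      simp only [hden]
      rw [mul_div_assoc']
      congr 1
      field_simp
    have hle : U r ≤ r ^ 2 / (4 * π) * (4 / (3 * r ^ 2) * Real.log (1 + r ^ 2 / 4)) := by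
      rw [U, ← heq]
      exact mul_le_mul_of_nonneg_left hmono (by positivity)
    refine hle.trans_eq ?_
    field_simp
end

section
/- The function U satisfies U(r) ~ (2/(3π)) log r as r → ∞, i.e. lim_{r→∞} U(r)/log r = 2/(3π). -/
open Real Filter

lemma integral_aux {c : ℝ} (hc : 1 < c) :
    ∫ z in (0:ℝ)..1, (z ^ 2 - z ^ 4 / 3) / (c ^ 2 - z ^ 2)
      = 1/9 + c^2/3 - 1 + (c^2 - c^4/3)/(2*c) * (Real.log (c+1) - Real.log (c-1)) := by
  have hc0 : (0:ℝ) < c := lt_trans one_pos hc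
  set F : ℝ → ℝ := fun z => z^3/9 + (c^2/3 - 1)*z
      + (c^2 - c^4/3)/(2*c) * (Real.log (c+z) - Real.log (c-z)) with hF
  have hderiv : ∀ z ∈ Set.uIcc (0:ℝ) 1,
      HasDerivAt F ((z^2 - z^4/3)/(c^2 - z^2)) z := by
    intro z hz
    rw [Set.uIcc_of_le (by norm_num : (0:ℝ) ≤ 1)] at hz
    obtain ⟨hz0, hz1⟩ := hz
    have hpz : 0 < c + z := by linarith
    have hmz : 0 < c - z := by linarith
    have hne : c^2 - z^2 ≠ 0 := by nlinarith
    have h1 : HasDerivAt (fun z : ℝ => Real.log (c+z)) (c+z)⁻¹ z := by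
      have := (Real.hasDerivAt_log hpz.ne').comp z ((hasDerivAt_id z).const_add c)
      simpa [Function.comp_def] using this
    have h2 : HasDerivAt (fun z : ℝ => Real.log (c-z)) (-(c-z)⁻¹) z := by
      have := (Real.hasDerivAt_log hmz.ne').comp z ((hasDerivAt_id z).neg.const_add c)
      simpa [Function.comp_def] using this
    have hA : HasDerivAt (fun z:ℝ => z^3/9) (3*z^2/9) z := by
      simpa using (hasDerivAt_pow 3 z).div_const 9
    have hB : HasDerivAt (fun z:ℝ => (c^2/3-1)*z) (c^2/3-1) z := by
      simpa using (hasDerivAt_id z).const_mul (c^2/3-1)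
    have hC := (h1.sub h2).const_mul ((c^2 - c^4/3)/(2*c))
    have hD := (hA.add hB).add hC
    refine hD.congr_deriv ?_
    field_simp [hpz.ne', hmz.ne']
    ring
  have hcont : ContinuousOn (fun z : ℝ => (z^2 - z^4/3)/(c^2 - z^2)) (Set.uIcc 0 1) := by
    apply ContinuousOn.div (by fun_prop) (by fun_prop)
    intro z hz
    rw [Set.uIcc_of_le (by norm_num : (0:ℝ) ≤ 1)] at hz
    obtain ⟨hz0, hz1⟩ := hz
    nlinarith
  have := intervalIntegral.integral_eq_sub_of_hasDerivAt hderiv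
    (hcont.intervalIntegrable)
  rw [this]
  simp only [hF]
  ring_nf

lemma U_eq {r c : ℝ} (hr : 0 < r) (hc : c = Real.sqrt (1 + 4/r^2)) :
    U r = (1/π) * (1/9 + c^2/3 - 1
      + (c^2 - c^4/3)/(2*c) * (Real.log (c+1) - Real.log (c-1))) := by
  have hr2 : (0:ℝ) < r^2 := by positivity
  have hc2 : c^2 = 1 + 4/r^2 := by
    rw [hc]; exact Real.sq_sqrt (by positivity)
  have hc1 : 1 < c := by
    have h4 : (0:ℝ) < 4/r^2 := by positivity
    rw [hc]
    exact (Real.lt_sqrt (by norm_num)).mpr (by linarith)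
  have hcongr : Set.EqOn (fun z : ℝ => (z^2 - z^4/3)/(1 + r^2*(1-z^2)/4))
      (fun z : ℝ => (4/r^2) * ((z^2 - z^4/3)/(c^2 - z^2))) (Set.uIcc 0 1) := by
    intro z hz
    rw [Set.uIcc_of_le (by norm_num : (0:ℝ) ≤ 1)] at hz
    obtain ⟨hz0, hz1⟩ := hz
    have hX : (0:ℝ) < c^2 - z^2 := by
      rw [hc2]; have : z^2 ≤ 1 := by nlinarith
      have : (0:ℝ) < 4/r^2 := by positivity
      linarith
    have hd : 1 + r^2*(1-z^2)/4 = (r^2/4) * (c^2 - z^2) := by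
      rw [hc2]; field_simp; ring
    simp only
    rw [hd, div_mul_eq_div_div, div_right_comm,
      div_eq_mul_inv ((z^2 - z^4/3)/(c^2 - z^2)) (r^2/4), inv_div, mul_comm]
  have h1 : (∫ z in (0:ℝ)..1, (z ^ 2 - z ^ 4 / 3) / (1 + r ^ 2 * (1 - z ^ 2) / 4))
      = (4/r^2) * ∫ z in (0:ℝ)..1, (z^2 - z^4/3)/(c^2 - z^2) := by
    rw [intervalIntegral.integral_congr hcongr, intervalIntegral.integral_const_mul]
  rw [U, h1, integral_aux hc1]
  have hπ : π ≠ 0 := Real.pi_ne_zero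
  field_simp

theorem uehling_asymptotics_at_infinity :
    Tendsto (fun r : ℝ => U r / Real.log r) atTop (nhds (2 / (3 * π))) := by
  set c : ℝ → ℝ := fun r => Real.sqrt (1 + 4/r^2) with hcdef
  have key : (fun r : ℝ => U r / Real.log r) =ᶠ[atTop]
      (fun r : ℝ => (1/π) * ((1/9 + (c r)^2/3 - 1) * (Real.log r)⁻¹
        + ((c r)^2 - (c r)^4/3)/(2*(c r))
          * (2 + 2*Real.log ((c r + 1)/2) * (Real.log r)⁻¹))) := by
    filter_upwards [eventually_ge_atTop (2:ℝ)] with r hr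
    have hr0 : (0:ℝ) < r := by linarith
    have hr2 : (0:ℝ) < r^2 := by positivity
    have hc2 : (c r)^2 = 1 + 4/r^2 := Real.sq_sqrt (by positivity)
    have hc1 : 1 < c r := by
      have h4 : (0:ℝ) < 4/r^2 := by positivity
      exact (Real.lt_sqrt (by norm_num)).mpr (by linarith)
    have hc0 : (0:ℝ) < c r := lt_trans one_pos hc1
    have hlr : 0 < Real.log r := Real.log_pos (by linarith)
    have he : c r - 1 = 4/(r^2*(c r + 1)) := by
      have hc2' : (c r)^2 * r^2 = r^2 + 4 := by
        rw [hc2]; field_simp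
      rw [eq_div_iff (by positivity)]
      linear_combination hc2'
    have hlog : Real.log (c r + 1) - Real.log (c r - 1)
        = 2*(Real.log ((c r + 1)/2) + Real.log r) := by
      rw [he, Real.log_div (by norm_num) (by positivity),
        Real.log_mul (by positivity) (by positivity),
        Real.log_div (by positivity) (by norm_num),
        show (4:ℝ) = 2^2 by norm_num, Real.log_pow,
        show r^2 = r^2 by rfl]
      rw [show Real.log (r^2) = Real.log (r^(2:ℕ)) by norm_num, Real.log_pow]
      push_cast
      ring
    have hcr : c r = Real.sqrt (1 + 4/r^2) := rfl
    rw [U_eq hr0 hcr, hlog]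
    have hπ : π ≠ 0 := Real.pi_ne_zero
    generalize hx : c r = x at hc0 ⊢
    generalize hM : Real.log ((x + 1)/2) = M
    generalize hL : Real.log r = L at hlr ⊢
    field_simp
    ring
  rw [tendsto_congr' key]
  have h0 : Tendsto (fun r : ℝ => 4/r^2) atTop (nhds 0) :=
    tendsto_const_nhds.div_atTop (tendsto_pow_atTop two_ne_zero)
  have hc1 : Tendsto c atTop (nhds 1) := by
    have h1 : Tendsto (fun r : ℝ => 1 + 4/r^2) atTop (nhds 1) := by
      simpa using tendsto_const_nhds.add h0
    have := (Real.continuous_sqrt.tendsto 1).comp h1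
    simpa [Function.comp_def, hcdef] using this
  have hli : Tendsto (fun r : ℝ => (Real.log r)⁻¹) atTop (nhds 0) :=
    tendsto_inv_atTop_zero.comp Real.tendsto_log_atTop
  have hc2 : Tendsto (fun r => (c r)^2) atTop (nhds 1) := by
    simpa using hc1.pow 2
  have hc4 : Tendsto (fun r => (c r)^4) atTop (nhds 1) := by
    simpa using hc1.pow 4
  have hA : Tendsto (fun r => (1/9 + (c r)^2/3 - 1) * (Real.log r)⁻¹) atTop
      (nhds ((1/9 + 1/3 - 1) * 0)) :=
    ((tendsto_const_nhds.add (hc2.div_const 3)).sub tendsto_const_nhds).mul hli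
  have hB : Tendsto (fun r => ((c r)^2 - (c r)^4/3)/(2*(c r))) atTop
      (nhds ((1 - 1/3)/(2*1))) :=
    (hc2.sub (hc4.div_const 3)).div (hc1.const_mul 2) (by norm_num)
  have hlogc : Tendsto (fun r => Real.log ((c r + 1)/2)) atTop (nhds 0) := by
    have h1 : Tendsto (fun r => (c r + 1)/2) atTop (nhds 1) := by
      have := (hc1.add (tendsto_const_nhds (x := (1:ℝ)))).div_const 2
      norm_num at this
      exact this
    have := ((Real.continuousAt_log one_ne_zero).tendsto).comp h1
    simpa [Function.comp_def] using this
  have hD : Tendsto (fun r => 2 + 2*Real.log ((c r + 1)/2) * (Real.log r)⁻¹) atTop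
      (nhds (2 + 2*0*0)) :=
    tendsto_const_nhds.add ((hlogc.const_mul 2).mul hli)
  have := tendsto_const_nhds.mul (hA.add (hB.mul hD)) (f := fun _ : ℝ => 1/π)
  convert this using 2
  field_simp
  ring
end

section
/- The integral formula and the explicit formula for U agree: for all r > 0, (r²/(4π)) ∫₀¹ (z² - z⁴/3)/(1 + r²(1-z²)/4) dz = (12 - 5r²)/(9πr²) + (√(4+r²)/(3πr³))(r² - 2) log((√(4+r²)+r)/(√(4+r²)-r)). -/
open Real

theorem uehling_explicit_formula (r : ℝ) (hr : 0 < r) :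
    r ^ 2 / (4 * π) * ∫ z in (0:ℝ)..1, (z ^ 2 - z ^ 4 / 3) / (1 + r ^ 2 * (1 - z ^ 2) / 4)
      = (12 - 5 * r ^ 2) / (9 * π * r ^ 2)
        + Real.sqrt (4 + r ^ 2) / (3 * π * r ^ 3) * (r ^ 2 - 2)
          * Real.log ((Real.sqrt (4 + r ^ 2) + r) / (Real.sqrt (4 + r ^ 2) - r)) := by
  have hr0 : r ≠ 0 := ne_of_gt hr
  set s : ℝ := Real.sqrt (4 + r ^ 2) with hs
  have hs2 : s ^ 2 = 4 + r ^ 2 := Real.sq_sqrt (by positivity)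
  have hspos : 0 < s := Real.sqrt_pos.mpr (by positivity)
  have hsr : r < s := by nlinarith
  set a : ℝ := s / r with ha
  have ha1 : 1 < a := (one_lt_div hr).mpr hsr
  have ha2 : a ^ 2 = (4 + r ^ 2) / r ^ 2 := by
    rw [ha, div_pow, hs2]
  set F : ℝ → ℝ := fun z => 4 / r ^ 2 * (z ^ 3 / 9 + (a ^ 2 / 3 - 1) * z
    - (a ^ 3 / 6 - a / 2) * (Real.log (a + z) - Real.log (a - z))) with hF
  have hderiv : ∀ z ∈ Set.uIcc (0:ℝ) 1, HasDerivAt F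
      ((z ^ 2 - z ^ 4 / 3) / (1 + r ^ 2 * (1 - z ^ 2) / 4)) z := by
    intro z hz
    rw [Set.uIcc_of_le (by norm_num)] at hz
    obtain ⟨hz0, hz1⟩ := hz
    have hap : 0 < a + z := by linarith
    have ham : 0 < a - z := by linarith
    have h1 : HasDerivAt (fun z : ℝ => Real.log (a + z)) (1 / (a + z)) z := by
      have := ((hasDerivAt_id z).const_add a).log (ne_of_gt hap)
      simpa using this
    have h2 : HasDerivAt (fun z : ℝ => Real.log (a - z)) ((-1) / (a - z)) z := by
      have := ((hasDerivAt_id z).const_sub a).log (ne_of_gt ham)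
      simpa using this
    have h3 : HasDerivAt (fun z : ℝ => z ^ 3 / 9 + (a ^ 2 / 3 - 1) * z
        - (a ^ 3 / 6 - a / 2) * (Real.log (a + z) - Real.log (a - z)))
        (3 * z ^ 2 / 9 + (a ^ 2 / 3 - 1)
          - (a ^ 3 / 6 - a / 2) * (1 / (a + z) - (-1) / (a - z))) z := by
      exact (((hasDerivAt_pow 3 z).div_const 9).add
        ((hasDerivAt_id z).const_mul (a ^ 2 / 3 - 1))).sub
        ((h1.sub h2).const_mul (a ^ 3 / 6 - a / 2)) |>.congr_deriv (by push_cast; ring)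
    have h4 := h3.const_mul (4 / r ^ 2)
    have hden : 1 + r ^ 2 * (1 - z ^ 2) / 4 = r ^ 2 / 4 * (a ^ 2 - z ^ 2) := by
      rw [ha2]; field_simp; ring
    refine h4.congr_deriv ?_
    rw [hden]
    have haz : a ^ 2 - z ^ 2 ≠ 0 := by nlinarith
    field_simp
    ring
  have hint : IntervalIntegrable
      (fun z => (z ^ 2 - z ^ 4 / 3) / (1 + r ^ 2 * (1 - z ^ 2) / 4)) MeasureTheory.volume 0 1 := by
    apply ContinuousOn.intervalIntegrable
    apply ContinuousOn.div
    · fun_prop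
    · fun_prop
    · intro z hz
      rw [Set.uIcc_of_le (by norm_num)] at hz
      obtain ⟨hz0, hz1⟩ := hz
      have h5 : 0 ≤ r ^ 2 * (1 - z ^ 2) := mul_nonneg (sq_nonneg r) (by nlinarith)
      positivity
  rw [intervalIntegral.integral_eq_sub_of_hasDerivAt hderiv hint]
  have hF0 : F 0 = 0 := by simp [hF]
  have hF1 : F 1 = 4 / r ^ 2 * (1 / 9 + (a ^ 2 / 3 - 1)
      - (a ^ 3 / 6 - a / 2) * Real.log ((s + r) / (s - r))) := by
    simp only [hF]
    have e1 : a + 1 = (s + r) / r := by rw [ha]; field_simp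
    have e2 : a - 1 = (s - r) / r := by rw [ha]; field_simp
    rw [e1, e2, Real.log_div (by positivity) hr0,
      Real.log_div (ne_of_gt (by linarith)) hr0,
      Real.log_div (by positivity) (ne_of_gt (by linarith))]
    ring
  rw [hF0, hF1, sub_zero]
  have ha3 : a ^ 3 = (4 + r ^ 2) * s / r ^ 3 := by
    rw [ha, div_pow, pow_succ, hs2]
  rw [ha2, ha3, ha]
  have hπ : π ≠ 0 := Real.pi_ne_zero
  field_simp
  ring
end

section
/- For the function Φ(r) = U'(r)/(1 + U(r)), there exist positive numbers T₋ < T₊ and Φ₀ such that Φ is an increasing diffeomorphism from (0, T₋) onto (0, Φ₀), a decreasing diffeomorphism from (T₊, ∞) onto (0, Φ₀), and Φ⁻¹((0, Φ₀)) = (0, T₋) ∪ (T₊, ∞). -/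
open Real Set

open MeasureTheory intervalIntegral

/-- The function `Φ = U'/(1+U)`. -/
noncomputable def Phi (r : ℝ) : ℝ := deriv U r / (1 + U r)

noncomputable def u1 (r : ℝ) : ℝ :=
  r / (2 * π) * ∫ z in (0:ℝ)..1, (z ^ 2 - z ^ 4 / 3) / (1 + r ^ 2 * (1 - z ^ 2) / 4) ^ 2

noncomputable def u2 (r : ℝ) : ℝ :=
  1 / (2 * π) * ∫ z in (0:ℝ)..1,
    (z ^ 2 - z ^ 4 / 3) * (1 - 3 * (r ^ 2 * (1 - z ^ 2) / 4)) / (1 + r ^ 2 * (1 - z ^ 2) / 4) ^ 3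

lemma den_pos {r z : ℝ} (hz : z ∈ Icc (0:ℝ) 1) : 0 < 1 + r ^ 2 * (1 - z ^ 2) / 4 := by
  obtain ⟨h0, h1⟩ := hz
  have h2 : z ^ 2 ≤ 1 := by nlinarith
  have h : 0 ≤ r ^ 2 * (1 - z ^ 2) := mul_nonneg (sq_nonneg r) (by linarith)
  linarith

lemma w_nonneg {z : ℝ} (hz : z ∈ Icc (0:ℝ) 1) : 0 ≤ z ^ 2 - z ^ 4 / 3 := by
  obtain ⟨h0, h1⟩ := hz
  have h2 : z ^ 2 ≤ 1 := by nlinarith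
  have h4 : z ^ 4 ≤ z ^ 2 := by nlinarith [sq_nonneg z]
  have h5 : 0 ≤ z ^ 2 := sq_nonneg z
  linarith

lemma w_le {z : ℝ} (hz : z ∈ Icc (0:ℝ) 1) : z ^ 2 - z ^ 4 / 3 ≤ 2/3 := by
  obtain ⟨h0, h1⟩ := hz
  have h2 : z ^ 2 ≤ 1 := by nlinarith
  nlinarith [mul_nonneg (by linarith : (0:ℝ) ≤ 1 - z ^ 2) (by linarith : (0:ℝ) ≤ 2 - z ^ 2)]

lemma intble1 (r : ℝ) :
    IntervalIntegrable (fun z => (z ^ 2 - z ^ 4 / 3) / (1 + r ^ 2 * (1 - z ^ 2) / 4)) volume 0 1 := by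
  apply ContinuousOn.intervalIntegrable
  rw [uIcc_of_le (by norm_num : (0:ℝ) ≤ 1)]
  exact ContinuousOn.div (by fun_prop) (by fun_prop) (fun z hz => (den_pos hz).ne')

lemma intble2 (r : ℝ) :
    IntervalIntegrable (fun z => (z ^ 2 - z ^ 4 / 3) / (1 + r ^ 2 * (1 - z ^ 2) / 4) ^ 2) volume 0 1 := by
  apply ContinuousOn.intervalIntegrable
  rw [uIcc_of_le (by norm_num : (0:ℝ) ≤ 1)]
  exact ContinuousOn.div (by fun_prop) (by fun_prop)
    (fun z hz => pow_ne_zero _ (den_pos hz).ne')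

lemma intble3 (r : ℝ) :
    IntervalIntegrable (fun z =>
      (z ^ 2 - z ^ 4 / 3) * (1 - 3 * (r ^ 2 * (1 - z ^ 2) / 4)) / (1 + r ^ 2 * (1 - z ^ 2) / 4) ^ 3)
      volume 0 1 := by
  apply ContinuousOn.intervalIntegrable
  rw [uIcc_of_le (by norm_num : (0:ℝ) ≤ 1)]
  exact ContinuousOn.div (by fun_prop) (by fun_prop)
    (fun z hz => pow_ne_zero _ (den_pos hz).ne')

lemma hasDerivAt_J (r : ℝ) :
    HasDerivAt (fun x => ∫ z in (0:ℝ)..1, (z ^ 2 - z ^ 4 / 3) / (1 + x ^ 2 * (1 - z ^ 2) / 4))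
      (∫ z in (0:ℝ)..1,
        -((z ^ 2 - z ^ 4 / 3) * ((1 - z ^ 2) * r / 2)) / (1 + r ^ 2 * (1 - z ^ 2) / 4) ^ 2) r := by
  have key := intervalIntegral.hasDerivAt_integral_of_dominated_loc_of_deriv_le
    (F := fun (x : ℝ) (z : ℝ) => (z ^ 2 - z ^ 4 / 3) / (1 + x ^ 2 * (1 - z ^ 2) / 4))
    (F' := fun (x : ℝ) (z : ℝ) =>
      -((z ^ 2 - z ^ 4 / 3) * ((1 - z ^ 2) * x / 2)) / (1 + x ^ 2 * (1 - z ^ 2) / 4) ^ 2)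
    (x₀ := r) (a := 0) (b := 1) (bound := fun _ => (|r| + 1) / 2) (s := Metric.ball r 1)
    (Metric.ball_mem_nhds r one_pos) ?_ (intble1 r) ?_ ?_ ?_ ?_
  · exact key.2
  · filter_upwards with x
    apply ContinuousOn.aestronglyMeasurable _ measurableSet_uIoc
    have : uIoc (0:ℝ) 1 ⊆ Icc 0 1 := by
      rw [uIoc_of_le (by norm_num : (0:ℝ) ≤ 1)]; exact Ioc_subset_Icc_self
    exact (ContinuousOn.div (by fun_prop) (by fun_prop)
      (fun z hz => (den_pos hz).ne')).mono this
  · apply ContinuousOn.aestronglyMeasurable _ measurableSet_uIoc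
    have : uIoc (0:ℝ) 1 ⊆ Icc 0 1 := by
      rw [uIoc_of_le (by norm_num : (0:ℝ) ≤ 1)]; exact Ioc_subset_Icc_self
    exact (ContinuousOn.div (by fun_prop) (by fun_prop)
      (fun z hz => pow_ne_zero _ (den_pos hz).ne')).mono this
  · filter_upwards with z hz x hx
    rw [uIoc_of_le (by norm_num : (0:ℝ) ≤ 1)] at hz
    have hz' : z ∈ Icc (0:ℝ) 1 := Ioc_subset_Icc_self hz
    have hd : (1:ℝ) ≤ 1 + x ^ 2 * (1 - z ^ 2) / 4 := by
      have h2 : z ^ 2 ≤ 1 := by nlinarith [hz'.1, hz'.2]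
      have h : 0 ≤ x ^ 2 * (1 - z ^ 2) := mul_nonneg (sq_nonneg x) (by linarith)
      linarith
    have hw0 := w_nonneg hz'
    have hwl := w_le hz'
    have hxr : |x| ≤ |r| + 1 := by
      have := mem_ball_iff_norm.mp hx
      have : |x - r| < 1 := by simpa [Real.norm_eq_abs] using this
      calc |x| = |x - r + r| := by ring_nf
        _ ≤ |x - r| + |r| := abs_add_le _ _
        _ ≤ |r| + 1 := by linarith
    have hs : 0 ≤ 1 - z ^ 2 := by nlinarith [hz'.1, hz'.2]
    have hs1 : 1 - z ^ 2 ≤ 1 := by nlinarith [hz'.1]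
    rw [Real.norm_eq_abs, abs_div]
    have hden : |((1 + x ^ 2 * (1 - z ^ 2) / 4)) ^ 2| = (1 + x ^ 2 * (1 - z ^ 2) / 4) ^ 2 :=
      abs_of_nonneg (by positivity)
    rw [hden]
    rw [div_le_iff₀ (by nlinarith)]
    have h1 : |(-((z ^ 2 - z ^ 4 / 3) * ((1 - z ^ 2) * x / 2)))|
        = (z ^ 2 - z ^ 4 / 3) * ((1 - z ^ 2) * |x| / 2) := by
      rw [abs_neg, abs_mul, abs_of_nonneg hw0, abs_div, abs_mul, abs_of_nonneg hs]
      norm_num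
    rw [h1]
    have hd2 : (1:ℝ) ≤ (1 + x ^ 2 * (1 - z ^ 2) / 4) ^ 2 := by nlinarith
    calc (z ^ 2 - z ^ 4 / 3) * ((1 - z ^ 2) * |x| / 2)
        ≤ 1 * (1 * (|r| + 1) / 2) := by
          apply mul_le_mul (by linarith) _ (by positivity) (by norm_num)
          apply div_le_div_of_nonneg_right _ (by norm_num)
          · exact mul_le_mul hs1 hxr (abs_nonneg x) (by norm_num)
      _ = (|r| + 1) / 2 := by ring
      _ ≤ (|r| + 1) / 2 * (1 + x ^ 2 * (1 - z ^ 2) / 4) ^ 2 := by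
          nlinarith [abs_nonneg r]
  · exact intervalIntegrable_const
  · filter_upwards with z hz x hx
    rw [uIoc_of_le (by norm_num : (0:ℝ) ≤ 1)] at hz
    have hz' : z ∈ Icc (0:ℝ) 1 := Ioc_subset_Icc_self hz
    have hd : (0:ℝ) < 1 + x ^ 2 * (1 - z ^ 2) / 4 := den_pos hz'
    have h1 : HasDerivAt (fun x : ℝ => 1 + x ^ 2 * (1 - z ^ 2) / 4)
        (x * (1 - z ^ 2) / 2) x := by
      have := ((hasDerivAt_pow 2 x).const_mul ((1 - z ^ 2) / 4)).const_add 1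
      rw [show (fun x : ℝ => 1 + x ^ 2 * (1 - z ^ 2) / 4) = (fun x => 1 + (1 - z ^ 2) / 4 * x ^ 2) by funext y; ring]
      refine this.congr_deriv ?_
      push_cast; ring
    have := (hasDerivAt_const x (z ^ 2 - z ^ 4 / 3)).div h1 hd.ne'
    refine this.congr_deriv ?_
    ring

lemma alg1 (D wv c : ℝ) (hD : D ≠ 0) (hc : c = D - 1) :
    wv / D = wv / D ^ 2 + c * wv / D ^ 2 := by
  field_simp
  linear_combination (-(wv)) * hc

lemma alg2 (D wv c : ℝ) (hD : D ≠ 0) (hc : c = D - 1) :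
    wv / D ^ 2 = wv / D ^ 3 + c * wv / D ^ 3 := by
  field_simp
  linear_combination (-(wv)) * hc

lemma pt1 (wv s D r : ℝ) (hD : D ≠ 0) (h : r ^ 2 * s = 4 * (D - 1)) :
    wv / D = wv / D ^ 2 + r ^ 2 / 4 * (wv * s / D ^ 2) := by
  have e : r ^ 2 / 4 * (wv * s / D ^ 2) = (D - 1) * wv / D ^ 2 := by
    linear_combination (wv / (4 * D ^ 2)) * h
  rw [e]
  exact alg1 D wv (D - 1) hD rfl

lemma pt2 (wv s D r : ℝ) (hD : D ≠ 0) (h : r ^ 2 * s = 4 * (D - 1)) :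
    wv / D ^ 2 = wv * (1 - 3 * (r ^ 2 * s / 4)) / D ^ 3 + r ^ 2 * (wv * s / D ^ 3) := by
  have e : wv * (1 - 3 * (r ^ 2 * s / 4)) / D ^ 3 + r ^ 2 * (wv * s / D ^ 3)
      = wv / D ^ 3 + (D - 1) * wv / D ^ 3 := by
    linear_combination (wv / (4 * D ^ 3)) * h
  rw [e]
  exact alg2 D wv (D - 1) hD rfl

lemma intble4 (r : ℝ) :
    IntervalIntegrable (fun z => (z ^ 2 - z ^ 4 / 3) * (1 - z ^ 2) / (1 + r ^ 2 * (1 - z ^ 2) / 4) ^ 2)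
      volume 0 1 := by
  apply ContinuousOn.intervalIntegrable
  rw [uIcc_of_le (by norm_num : (0:ℝ) ≤ 1)]
  exact ContinuousOn.div (by fun_prop) (by fun_prop) (fun z hz => pow_ne_zero _ (den_pos hz).ne')

lemma intble5 (r : ℝ) :
    IntervalIntegrable (fun z => (z ^ 2 - z ^ 4 / 3) * (1 - z ^ 2) / (1 + r ^ 2 * (1 - z ^ 2) / 4) ^ 3)
      volume 0 1 := by
  apply ContinuousOn.intervalIntegrable
  rw [uIcc_of_le (by norm_num : (0:ℝ) ≤ 1)]
  exact ContinuousOn.div (by fun_prop) (by fun_prop) (fun z hz => pow_ne_zero _ (den_pos hz).ne')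

lemma hasDerivAt_U (r : ℝ) : HasDerivAt U (u1 r) r := by
  have hJ := hasDerivAt_J r
  have h2 : HasDerivAt (fun x : ℝ => x ^ 2 / (4 * π)) (r / (2 * π)) r := by
    have h := (hasDerivAt_pow 2 r).div_const (4 * π)
    have e : ((2:ℕ) * r ^ (2 - 1) : ℝ) / (4 * π) = r / (2 * π) := by
      push_cast
      rw [pow_one, div_eq_div_iff (by positivity) (by positivity)]
      ring
    rw [e] at h
    exact h
  have hU : HasDerivAt U
      (r / (2 * π) * (∫ z in (0:ℝ)..1, (z ^ 2 - z ^ 4 / 3) / (1 + r ^ 2 * (1 - z ^ 2) / 4))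
        + r ^ 2 / (4 * π) * ∫ z in (0:ℝ)..1,
          -((z ^ 2 - z ^ 4 / 3) * ((1 - z ^ 2) * r / 2)) / (1 + r ^ 2 * (1 - z ^ 2) / 4) ^ 2) r := by
    have := h2.mul hJ
    exact this
  have E1 : (∫ z in (0:ℝ)..1,
      -((z ^ 2 - z ^ 4 / 3) * ((1 - z ^ 2) * r / 2)) / (1 + r ^ 2 * (1 - z ^ 2) / 4) ^ 2)
      = -(r/2) * ∫ z in (0:ℝ)..1,
        (z ^ 2 - z ^ 4 / 3) * (1 - z ^ 2) / (1 + r ^ 2 * (1 - z ^ 2) / 4) ^ 2 := by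
    rw [← intervalIntegral.integral_const_mul]
    apply intervalIntegral.integral_congr
    intro z hz
    ring
  have E2 : (∫ z in (0:ℝ)..1, (z ^ 2 - z ^ 4 / 3) / (1 + r ^ 2 * (1 - z ^ 2) / 4))
      = (∫ z in (0:ℝ)..1, (z ^ 2 - z ^ 4 / 3) / (1 + r ^ 2 * (1 - z ^ 2) / 4) ^ 2)
        + r ^ 2 / 4 * ∫ z in (0:ℝ)..1,
          (z ^ 2 - z ^ 4 / 3) * (1 - z ^ 2) / (1 + r ^ 2 * (1 - z ^ 2) / 4) ^ 2 := by
    rw [← intervalIntegral.integral_const_mul, ← intervalIntegral.integral_add (intble2 r)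
      ((intble4 r).const_mul _)]
    apply intervalIntegral.integral_congr
    intro z hz
    rw [uIcc_of_le (by norm_num : (0:ℝ) ≤ 1)] at hz
    have hd := (den_pos (r := r) hz).ne'
    dsimp only
    generalize hD : 1 + r ^ 2 * (1 - z ^ 2) / 4 = D at hd ⊢
    have h4 : r ^ 2 * (1 - z ^ 2) = 4 * (D - 1) := by linarith
    exact pt1 _ _ _ _ hd h4
  rw [E1, E2] at hU
  convert hU using 1
  unfold u1
  ring

lemma hasDerivAt_K (r : ℝ) :
    HasDerivAt (fun x => ∫ z in (0:ℝ)..1, (z ^ 2 - z ^ 4 / 3) / (1 + x ^ 2 * (1 - z ^ 2) / 4) ^ 2)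
      (∫ z in (0:ℝ)..1,
        -((z ^ 2 - z ^ 4 / 3) * ((1 - z ^ 2) * r)) / (1 + r ^ 2 * (1 - z ^ 2) / 4) ^ 3) r := by
  have key := intervalIntegral.hasDerivAt_integral_of_dominated_loc_of_deriv_le
    (F := fun (x : ℝ) (z : ℝ) => (z ^ 2 - z ^ 4 / 3) / (1 + x ^ 2 * (1 - z ^ 2) / 4) ^ 2)
    (F' := fun (x : ℝ) (z : ℝ) =>
      -((z ^ 2 - z ^ 4 / 3) * ((1 - z ^ 2) * x)) / (1 + x ^ 2 * (1 - z ^ 2) / 4) ^ 3)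
    (x₀ := r) (a := 0) (b := 1) (bound := fun _ => |r| + 1) (s := Metric.ball r 1)
    (Metric.ball_mem_nhds r one_pos) ?_ (intble2 r) ?_ ?_ ?_ ?_
  · exact key.2
  · filter_upwards with x
    apply ContinuousOn.aestronglyMeasurable _ measurableSet_uIoc
    have : uIoc (0:ℝ) 1 ⊆ Icc 0 1 := by
      rw [uIoc_of_le (by norm_num : (0:ℝ) ≤ 1)]; exact Ioc_subset_Icc_self
    exact (ContinuousOn.div (by fun_prop) (by fun_prop)
      (fun z hz => pow_ne_zero _ (den_pos hz).ne')).mono this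
  · apply ContinuousOn.aestronglyMeasurable _ measurableSet_uIoc
    have : uIoc (0:ℝ) 1 ⊆ Icc 0 1 := by
      rw [uIoc_of_le (by norm_num : (0:ℝ) ≤ 1)]; exact Ioc_subset_Icc_self
    exact (ContinuousOn.div (by fun_prop) (by fun_prop)
      (fun z hz => pow_ne_zero _ (den_pos hz).ne')).mono this
  · filter_upwards with z hz x hx
    rw [uIoc_of_le (by norm_num : (0:ℝ) ≤ 1)] at hz
    have hz' : z ∈ Icc (0:ℝ) 1 := Ioc_subset_Icc_self hz
    have h2 : z ^ 2 ≤ 1 := by nlinarith [hz'.1, hz'.2]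
    have hd : (1:ℝ) ≤ 1 + x ^ 2 * (1 - z ^ 2) / 4 := by
      have h : 0 ≤ x ^ 2 * (1 - z ^ 2) := mul_nonneg (sq_nonneg x) (by linarith)
      linarith
    have hw0 := w_nonneg hz'
    have hwl := w_le hz'
    have hxr : |x| ≤ |r| + 1 := by
      have h := mem_ball_iff_norm.mp hx
      have h' : |x - r| < 1 := by simpa [Real.norm_eq_abs] using h
      calc |x| = |x - r + r| := by ring_nf
        _ ≤ |x - r| + |r| := abs_add_le _ _
        _ ≤ |r| + 1 := by linarith
    have hs : 0 ≤ 1 - z ^ 2 := by linarith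
    have hs1 : 1 - z ^ 2 ≤ 1 := by nlinarith [sq_nonneg z]
    rw [Real.norm_eq_abs, abs_div]
    have hden : |((1 + x ^ 2 * (1 - z ^ 2) / 4)) ^ 3| = (1 + x ^ 2 * (1 - z ^ 2) / 4) ^ 3 :=
      abs_of_nonneg (by positivity)
    rw [hden, div_le_iff₀ (by positivity)]
    have h1 : |(-((z ^ 2 - z ^ 4 / 3) * ((1 - z ^ 2) * x)))|
        = (z ^ 2 - z ^ 4 / 3) * ((1 - z ^ 2) * |x|) := by
      rw [abs_neg, abs_mul, abs_of_nonneg hw0, abs_mul, abs_of_nonneg hs]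
    rw [h1]
    have hd3 : (1:ℝ) ≤ (1 + x ^ 2 * (1 - z ^ 2) / 4) ^ 3 := one_le_pow₀ hd
    calc (z ^ 2 - z ^ 4 / 3) * ((1 - z ^ 2) * |x|)
        ≤ 1 * (1 * (|r| + 1)) := by
          apply mul_le_mul (by linarith) _ (by positivity) (by norm_num)
          exact mul_le_mul hs1 hxr (abs_nonneg x) (by norm_num)
      _ = (|r| + 1) := by ring
      _ ≤ (|r| + 1) * (1 + x ^ 2 * (1 - z ^ 2) / 4) ^ 3 := by
          nlinarith [abs_nonneg r]
  · exact intervalIntegrable_const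
  · filter_upwards with z hz x hx
    rw [uIoc_of_le (by norm_num : (0:ℝ) ≤ 1)] at hz
    have hz' : z ∈ Icc (0:ℝ) 1 := Ioc_subset_Icc_self hz
    have hd : (0:ℝ) < 1 + x ^ 2 * (1 - z ^ 2) / 4 := den_pos hz'
    have h1 : HasDerivAt (fun x : ℝ => 1 + x ^ 2 * (1 - z ^ 2) / 4)
        (x * (1 - z ^ 2) / 2) x := by
      have := ((hasDerivAt_pow 2 x).const_mul ((1 - z ^ 2) / 4)).const_add 1
      rw [show (fun x : ℝ => 1 + x ^ 2 * (1 - z ^ 2) / 4) = (fun x => 1 + (1 - z ^ 2) / 4 * x ^ 2) by funext y; ring]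
      refine this.congr_deriv ?_
      push_cast; ring
    have h2 : HasDerivAt (fun x : ℝ => (1 + x ^ 2 * (1 - z ^ 2) / 4) ^ 2)
        (2 * (1 + x ^ 2 * (1 - z ^ 2) / 4) ^ 1 * (x * (1 - z ^ 2) / 2)) x := by
      simpa using h1.fun_pow 2
    have h3 := (hasDerivAt_const x (z ^ 2 - z ^ 4 / 3)).div h2 (pow_ne_zero 2 hd.ne')
    refine h3.congr_deriv ?_
    have hd' := hd.ne'
    generalize hD : 1 + x ^ 2 * (1 - z ^ 2) / 4 = D at hd' ⊢
    field_simp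
    ring

lemma hasDerivAt_u1 (r : ℝ) : HasDerivAt u1 (u2 r) r := by
  have hK := hasDerivAt_K r
  have h2 : HasDerivAt (fun x : ℝ => x / (2 * π)) (1 / (2 * π)) r := by
    simpa using (hasDerivAt_id r).div_const (2 * π)
  have h := h2.mul hK
  have E1 : (∫ z in (0:ℝ)..1,
      -((z ^ 2 - z ^ 4 / 3) * ((1 - z ^ 2) * r)) / (1 + r ^ 2 * (1 - z ^ 2) / 4) ^ 3)
      = -r * ∫ z in (0:ℝ)..1,
        (z ^ 2 - z ^ 4 / 3) * (1 - z ^ 2) / (1 + r ^ 2 * (1 - z ^ 2) / 4) ^ 3 := by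
    rw [← intervalIntegral.integral_const_mul]
    apply intervalIntegral.integral_congr
    intro z hz
    ring
  have E2 : (∫ z in (0:ℝ)..1, (z ^ 2 - z ^ 4 / 3) / (1 + r ^ 2 * (1 - z ^ 2) / 4) ^ 2)
      = (∫ z in (0:ℝ)..1, (z ^ 2 - z ^ 4 / 3) * (1 - 3 * (r ^ 2 * (1 - z ^ 2) / 4))
          / (1 + r ^ 2 * (1 - z ^ 2) / 4) ^ 3)
        + r ^ 2 * ∫ z in (0:ℝ)..1,
          (z ^ 2 - z ^ 4 / 3) * (1 - z ^ 2) / (1 + r ^ 2 * (1 - z ^ 2) / 4) ^ 3 := by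
    rw [← intervalIntegral.integral_const_mul, ← intervalIntegral.integral_add (intble3 r)
      ((intble5 r).const_mul _)]
    apply intervalIntegral.integral_congr
    intro z hz
    rw [uIcc_of_le (by norm_num : (0:ℝ) ≤ 1)] at hz
    have hd := (den_pos (r := r) hz).ne'
    dsimp only
    generalize hD : 1 + r ^ 2 * (1 - z ^ 2) / 4 = D at hd ⊢
    have h4 : r ^ 2 * (1 - z ^ 2) = 4 * (D - 1) := by linarith
    exact pt2 _ _ _ _ hd h4
  rw [E1] at h
  have : HasDerivAt u1
      (1 / (2 * π) * (∫ z in (0:ℝ)..1, (z ^ 2 - z ^ 4 / 3) / (1 + r ^ 2 * (1 - z ^ 2) / 4) ^ 2)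
        + r / (2 * π) * (-r * ∫ z in (0:ℝ)..1,
          (z ^ 2 - z ^ 4 / 3) * (1 - z ^ 2) / (1 + r ^ 2 * (1 - z ^ 2) / 4) ^ 3)) r := h
  rw [E2] at this
  convert this using 1
  unfold u2
  ring

lemma derivU (r : ℝ) : deriv U r = u1 r := (hasDerivAt_U r).deriv

lemma Phi_eq : Phi = fun r => u1 r / (1 + U r) := by
  funext r
  unfold Phi
  rw [derivU]

lemma U_nonneg (r : ℝ) : 0 ≤ U r := by
  apply mul_nonneg (by positivity)
  exact intervalIntegral.integral_nonneg (by norm_num)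
    (fun z hz => div_nonneg (w_nonneg hz) (den_pos hz).le)

lemma one_add_U_pos (r : ℝ) : 0 < 1 + U r := by linarith [U_nonneg r]

lemma u1_pos {r : ℝ} (hr : 0 < r) : 0 < u1 r := by
  apply mul_pos (by positivity)
  apply intervalIntegral.intervalIntegral_pos_of_pos_on (intble2 r) _ one_pos
  intro z hz
  obtain ⟨h0, h1⟩ := hz
  have hz' : z ∈ Icc (0:ℝ) 1 := ⟨h0.le, h1.le⟩
  apply div_pos _ (pow_pos (den_pos hz') 2)
  have h2 : 0 < z ^ 2 := by positivity
  have h3 : z ^ 2 < 1 := by nlinarith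
  nlinarith

lemma u1_nonneg {r : ℝ} (hr : 0 ≤ r) : 0 ≤ u1 r := by
  apply mul_nonneg (by positivity)
  exact intervalIntegral.integral_nonneg (by norm_num)
    (fun z hz => div_nonneg (w_nonneg hz) (pow_nonneg (den_pos hz).le 2))

lemma Phi_nonneg {r : ℝ} (hr : 0 ≤ r) : 0 ≤ Phi r := by
  rw [Phi_eq]
  exact div_nonneg (u1_nonneg hr) (one_add_U_pos r).le

lemma Phi_pos {r : ℝ} (hr : 0 < r) : 0 < Phi r := by
  rw [Phi_eq]
  exact div_pos (u1_pos hr) (one_add_U_pos r)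

lemma Phi_zero : Phi 0 = 0 := by
  rw [Phi_eq]
  simp [u1]

lemma intW : (∫ z in (0:ℝ)..1, (z ^ 2 - z ^ 4 / 3)) = 4 / 15 := by
  have h1 : IntervalIntegrable (fun z : ℝ => z ^ 2) volume 0 1 :=
    (continuous_pow 2).intervalIntegrable 0 1
  have h2 : IntervalIntegrable (fun z : ℝ => z ^ 4 / 3) volume 0 1 :=
    ((continuous_pow 4).div_const 3).intervalIntegrable 0 1
  rw [intervalIntegral.integral_sub h1 h2, intervalIntegral.integral_div]
  simp [integral_pow]
  norm_num

lemma intble_w : IntervalIntegrable (fun z : ℝ => z ^ 2 - z ^ 4 / 3) volume 0 1 :=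
  ((continuous_pow 2).sub ((continuous_pow 4).div_const 3)).intervalIntegrable 0 1

lemma u1_le_small {r : ℝ} (hr : 0 ≤ r) : u1 r ≤ r * (2 / (15 * π)) := by
  have hmono : (∫ z in (0:ℝ)..1, (z ^ 2 - z ^ 4 / 3) / (1 + r ^ 2 * (1 - z ^ 2) / 4) ^ 2)
      ≤ ∫ z in (0:ℝ)..1, (z ^ 2 - z ^ 4 / 3) := by
    apply intervalIntegral.integral_mono_on (by norm_num) (intble2 r) intble_w
    intro z hz
    have hd := den_pos (r := r) hz
    have h2 : z ^ 2 ≤ 1 := by obtain ⟨h0,h1⟩ := hz; nlinarith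
    have hd1 : (1:ℝ) ≤ (1 + r ^ 2 * (1 - z ^ 2) / 4) ^ 2 := by
      have h : 0 ≤ r ^ 2 * (1 - z ^ 2) := mul_nonneg (sq_nonneg r) (by linarith)
      nlinarith
    exact div_le_self (w_nonneg hz) hd1
  rw [intW] at hmono
  have h0 : 0 ≤ r / (2 * π) := by positivity
  calc u1 r ≤ r / (2 * π) * (4 / 15) := mul_le_mul_of_nonneg_left hmono h0
    _ = r * (2 / (15 * π)) := by
        field_simp
        ring

lemma u1_le_large {r : ℝ} (hr : 0 < r) : u1 r ≤ 4 / (3 * π * r) := by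
  have hne : ∀ z ∈ Icc (0:ℝ) 1, (0:ℝ) < 1 + r ^ 2 * (1 - z) / 4 := by
    intro z hz
    have h : 0 ≤ r ^ 2 * (1 - z) := mul_nonneg (sq_nonneg r) (by linarith [hz.2])
    linarith
  have hintRHS : IntervalIntegrable (fun z : ℝ => (2/3) / (1 + r ^ 2 * (1 - z) / 4) ^ 2)
      volume 0 1 := by
    apply ContinuousOn.intervalIntegrable
    rw [uIcc_of_le (by norm_num : (0:ℝ) ≤ 1)]
    exact ContinuousOn.div (by fun_prop) (by fun_prop)
      (fun z hz => pow_ne_zero _ (hne z hz).ne')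
  have hmono : (∫ z in (0:ℝ)..1, (z ^ 2 - z ^ 4 / 3) / (1 + r ^ 2 * (1 - z ^ 2) / 4) ^ 2)
      ≤ ∫ z in (0:ℝ)..1, (2/3) / (1 + r ^ 2 * (1 - z) / 4) ^ 2 := by
    apply intervalIntegral.integral_mono_on (by norm_num) (intble2 r) hintRHS
    intro z hz
    obtain ⟨h0, h1⟩ := hz
    have he := hne z ⟨h0, h1⟩
    have hd := den_pos (r := r) ⟨h0, h1⟩
    have hzz : 1 - z ≤ 1 - z ^ 2 := by nlinarith
    have hed : 1 + r ^ 2 * (1 - z) / 4 ≤ 1 + r ^ 2 * (1 - z ^ 2) / 4 := by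
      have := mul_le_mul_of_nonneg_left hzz (sq_nonneg r)
      linarith
    exact div_le_div₀ (by norm_num) (w_le ⟨h0, h1⟩) (pow_pos he 2)
      (pow_le_pow_left₀ he.le hed 2)
  have hFTC : (∫ z in (0:ℝ)..1, (2/3) / (1 + r ^ 2 * (1 - z) / 4) ^ 2)
      = 8 / (3 * r ^ 2) * (1 - (1 + r ^ 2 / 4)⁻¹) := by
    have hder : ∀ z ∈ uIcc (0:ℝ) 1,
        HasDerivAt (fun z : ℝ => 8 / (3 * r ^ 2) * (1 + r ^ 2 * (1 - z) / 4)⁻¹)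
          ((2/3) / (1 + r ^ 2 * (1 - z) / 4) ^ 2) z := by
      intro z hz
      rw [uIcc_of_le (by norm_num : (0:ℝ) ≤ 1)] at hz
      have he := hne z hz
      have hi : HasDerivAt (fun z : ℝ => 1 + r ^ 2 * (1 - z) / 4) (r ^ 2 * (-1) / 4) z := by
        exact ((((hasDerivAt_id z).const_sub 1).const_mul (r ^ 2)).div_const 4).const_add 1
      have := (hi.inv he.ne').const_mul (8 / (3 * r ^ 2))
      refine this.congr_deriv ?_
      have hrne : (r:ℝ) ≠ 0 := hr.ne'
      generalize hE : 1 + r ^ 2 * (1 - z) / 4 = E at he ⊢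
      field_simp
      ring
    rw [intervalIntegral.integral_eq_sub_of_hasDerivAt hder hintRHS]
    simp
    ring
  have hle : (∫ z in (0:ℝ)..1, (2/3) / (1 + r ^ 2 * (1 - z) / 4) ^ 2) ≤ 8 / (3 * r ^ 2) := by
    rw [hFTC]
    have h1 : 0 < 1 + r ^ 2 / 4 := by positivity
    have h2 : (1 + r ^ 2 / 4)⁻¹ ≤ 1 := by
      rw [inv_le_one_iff₀]; right; nlinarith [sq_nonneg r]
    have h3 : 0 < (1 + r ^ 2 / 4)⁻¹ := by positivity
    have h4 : (0:ℝ) ≤ 8 / (3 * r ^ 2) := by positivity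
    nlinarith
  have h0 : 0 ≤ r / (2 * π) := by positivity
  calc u1 r ≤ r / (2 * π) * (8 / (3 * r ^ 2)) :=
        mul_le_mul_of_nonneg_left (hmono.trans hle) h0
    _ = 4 / (3 * π * r) := by
        field_simp
        ring

lemma u2_pointwise_deriv (r : ℝ) : ∀ z ∈ uIcc (0:ℝ) 1, HasDerivAt
    (fun z => ((z - z ^ 3 / 3) / 2) *
      ((1 + 3 * (r ^ 2 * (1 - z ^ 2) / 4)) / (1 + r ^ 2 * (1 - z ^ 2) / 4) ^ 2))
    ((((1 - z ^ 2) / 2) * (1 + 3 * (r ^ 2 * (1 - z ^ 2) / 4))) / (1 + r ^ 2 * (1 - z ^ 2) / 4) ^ 2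
      - r ^ 2 / 4 * ((z ^ 2 - z ^ 4 / 3) * (1 - 3 * (r ^ 2 * (1 - z ^ 2) / 4))
          / (1 + r ^ 2 * (1 - z ^ 2) / 4) ^ 3)) z := by
  intro z hz
  rw [uIcc_of_le (by norm_num : (0:ℝ) ≤ 1)] at hz
  have hd0 : 0 < 1 + r ^ 2 * (1 - z ^ 2) / 4 := den_pos hz
  have hP : HasDerivAt (fun z : ℝ => (z - z ^ 3 / 3) / 2) ((1 - z ^ 2) / 2) z := by
    have h := ((hasDerivAt_id z).sub ((hasDerivAt_pow 3 z).div_const 3)).div_const 2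
    refine h.congr_deriv ?_
    push_cast
    ring
  have hs : HasDerivAt (fun z : ℝ => 1 + r ^ 2 * (1 - z ^ 2) / 4) (-(r ^ 2 * z / 2)) z := by
    have h := ((((hasDerivAt_pow 2 z).const_sub 1).const_mul (r ^ 2)).div_const 4).const_add 1
    refine h.congr_deriv ?_
    push_cast
    ring
  have hQ : HasDerivAt (fun z : ℝ => 1 + 3 * (r ^ 2 * (1 - z ^ 2) / 4)) (-(3 * (r ^ 2 * z / 2))) z := by
    have h := (((((hasDerivAt_pow 2 z).const_sub 1).const_mul (r ^ 2)).div_const 4).const_mul 3).const_add 1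
    refine h.congr_deriv ?_
    push_cast
    ring
  have hD2 : HasDerivAt (fun z : ℝ => (1 + r ^ 2 * (1 - z ^ 2) / 4) ^ 2)
      (2 * (1 + r ^ 2 * (1 - z ^ 2) / 4) ^ 1 * (-(r ^ 2 * z / 2))) z := by
    simpa using hs.fun_pow 2
  have hquot := hQ.div hD2 (pow_ne_zero 2 hd0.ne')
  have h := hP.mul hquot
  refine h.congr_deriv ?_
  simp only [Pi.div_apply]
  have hd := hd0.ne'
  generalize hD : 1 + r ^ 2 * (1 - z ^ 2) / 4 = D at hd ⊢
  have h4 : r ^ 2 * (1 - z ^ 2) = 4 * (D - 1) := by linarith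
  field_simp
  subst hD
  ring

lemma u2_lower {r : ℝ} (hr : r ∈ Icc (0:ℝ) (4/5)) : 1 / (25 * π) ≤ u2 r := by
  obtain ⟨hr0, hr1⟩ := hr
  have hmono : (∫ z in (0:ℝ)..1, (3:ℝ)/10 * (z ^ 2 - z ^ 4 / 3))
      ≤ ∫ z in (0:ℝ)..1, (z ^ 2 - z ^ 4 / 3) * (1 - 3 * (r ^ 2 * (1 - z ^ 2) / 4))
          / (1 + r ^ 2 * (1 - z ^ 2) / 4) ^ 3 := by
    apply intervalIntegral.integral_mono_on (by norm_num) (intble_w.const_mul _) (intble3 r)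
    intro z hz
    obtain ⟨h0, h1⟩ := hz
    have hw := w_nonneg ⟨h0, h1⟩
    have hs0 : 0 ≤ 1 - z ^ 2 := by nlinarith
    have hs1 : 1 - z ^ 2 ≤ 1 := by nlinarith
    have hr2 : r ^ 2 ≤ 16/25 := by nlinarith
    have hB0 : 0 ≤ r ^ 2 * (1 - z ^ 2) / 4 := by positivity
    have hB1 : r ^ 2 * (1 - z ^ 2) / 4 ≤ 4/25 := by nlinarith [mul_le_mul hr2 hs1 hs0 (by norm_num : (0:ℝ) ≤ 16/25)]
    have hd0 : (0:ℝ) < 1 + r ^ 2 * (1 - z ^ 2) / 4 := by linarith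
    have hdu : 1 + r ^ 2 * (1 - z ^ 2) / 4 ≤ 29/25 := by linarith
    rw [le_div_iff₀ (pow_pos hd0 3)]
    have hd3 : (1 + r ^ 2 * (1 - z ^ 2) / 4) ^ 3 ≤ (29/25) ^ 3 :=
      pow_le_pow_left₀ hd0.le hdu 3
    have f1 : 3/10 * (z ^ 2 - z ^ 4 / 3) * (1 + r ^ 2 * (1 - z ^ 2) / 4) ^ 3
        ≤ 3/10 * (z ^ 2 - z ^ 4 / 3) * (29/25) ^ 3 :=
      mul_le_mul_of_nonneg_left hd3 (by positivity)
    have f2 : (z ^ 2 - z ^ 4 / 3) * (13/25) ≤ (z ^ 2 - z ^ 4 / 3) * (1 - 3 * (r ^ 2 * (1 - z ^ 2) / 4)) :=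
      mul_le_mul_of_nonneg_left (by linarith) hw
    nlinarith
  have hcalc : (∫ z in (0:ℝ)..1, (3:ℝ)/10 * (z ^ 2 - z ^ 4 / 3)) = 2/25 := by
    rw [intervalIntegral.integral_const_mul, intW]
    norm_num
  rw [hcalc] at hmono
  have hπ : (0:ℝ) < π := Real.pi_pos
  unfold u2
  calc 1 / (25 * π) = 1 / (2 * π) * (2/25) := by
        field_simp
      _ ≤ _ := mul_le_mul_of_nonneg_left hmono (by positivity)

lemma u2_neg {r : ℝ} (hr : 5 ≤ r) : u2 r < 0 := by
  have hr0 : (0:ℝ) < r := by linarith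
  have hπ : (0:ℝ) < π := Real.pi_pos
  -- integrability of the two pieces
  have hi1 : IntervalIntegrable (fun z : ℝ =>
      (((1 - z ^ 2) / 2) * (1 + 3 * (r ^ 2 * (1 - z ^ 2) / 4))) / (1 + r ^ 2 * (1 - z ^ 2) / 4) ^ 2)
      volume 0 1 := by
    apply ContinuousOn.intervalIntegrable
    rw [uIcc_of_le (by norm_num : (0:ℝ) ≤ 1)]
    exact ContinuousOn.div (by fun_prop) (by fun_prop) (fun z hz => pow_ne_zero _ (den_pos hz).ne')
  have hi2 : IntervalIntegrable (fun z : ℝ =>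
      r ^ 2 / 4 * ((z ^ 2 - z ^ 4 / 3) * (1 - 3 * (r ^ 2 * (1 - z ^ 2) / 4))
        / (1 + r ^ 2 * (1 - z ^ 2) / 4) ^ 3)) volume 0 1 := (intble3 r).const_mul _
  have hFTC := intervalIntegral.integral_eq_sub_of_hasDerivAt (u2_pointwise_deriv r)
    (hi1.sub hi2)
  rw [intervalIntegral.integral_sub hi1 hi2] at hFTC
  have hval : ((fun z : ℝ => ((z - z ^ 3 / 3) / 2) *
      ((1 + 3 * (r ^ 2 * (1 - z ^ 2) / 4)) / (1 + r ^ 2 * (1 - z ^ 2) / 4) ^ 2)) 1)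
      - ((fun z : ℝ => ((z - z ^ 3 / 3) / 2) *
      ((1 + 3 * (r ^ 2 * (1 - z ^ 2) / 4)) / (1 + r ^ 2 * (1 - z ^ 2) / 4) ^ 2)) 0) = 1/3 := by
    norm_num
  rw [hval] at hFTC
  -- bound the first integral by 6 / r^2
  have hb : (∫ z in (0:ℝ)..1,
      (((1 - z ^ 2) / 2) * (1 + 3 * (r ^ 2 * (1 - z ^ 2) / 4))) / (1 + r ^ 2 * (1 - z ^ 2) / 4) ^ 2)
      ≤ 6 / r ^ 2 := by
    have h1 : (∫ z in (0:ℝ)..1,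
        (((1 - z ^ 2) / 2) * (1 + 3 * (r ^ 2 * (1 - z ^ 2) / 4))) / (1 + r ^ 2 * (1 - z ^ 2) / 4) ^ 2)
        ≤ ∫ _ in (0:ℝ)..1, 6 / r ^ 2 := by
      apply intervalIntegral.integral_mono_on (by norm_num) hi1 intervalIntegrable_const
      intro z hz
      obtain ⟨h0, h1⟩ := hz
      have hs0 : 0 ≤ 1 - z ^ 2 := by nlinarith
      have hs1 : 1 - z ^ 2 ≤ 1 := by nlinarith
      have hd0 : (0:ℝ) < 1 + r ^ 2 * (1 - z ^ 2) / 4 := den_pos ⟨h0, h1⟩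
      rw [div_le_div_iff₀ (pow_pos hd0 2) (by positivity)]
      have hAs : 0 ≤ r ^ 2 * (1 - z ^ 2) := mul_nonneg (sq_nonneg r) hs0
      nlinarith [sq_nonneg (r ^ 2 * (1 - z ^ 2)), sq_nonneg r]
    simpa using h1
  -- conclude
  have hkey : r ^ 2 / 4 * (∫ z in (0:ℝ)..1, (z ^ 2 - z ^ 4 / 3) * (1 - 3 * (r ^ 2 * (1 - z ^ 2) / 4))
      / (1 + r ^ 2 * (1 - z ^ 2) / 4) ^ 3) ≤ 6 / r ^ 2 - 1/3 := by
    rw [intervalIntegral.integral_const_mul] at hFTC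
    linarith
  have hneg : (∫ z in (0:ℝ)..1, (z ^ 2 - z ^ 4 / 3) * (1 - 3 * (r ^ 2 * (1 - z ^ 2) / 4))
      / (1 + r ^ 2 * (1 - z ^ 2) / 4) ^ 3) < 0 := by
    have h25 : (25:ℝ) ≤ r ^ 2 := by nlinarith
    have hrhs : 6 / r ^ 2 - 1/3 < 0 := by
      have : 6 / r ^ 2 ≤ 6 / 25 := by
        apply div_le_div_of_nonneg_left (by norm_num) (by norm_num) h25
      linarith
    nlinarith [hkey, sq_nonneg r]
  unfold u2
  exact mul_neg_of_pos_of_neg (by positivity) hneg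

lemma hasDerivAt_Phi (r : ℝ) : HasDerivAt Phi
    ((u2 r * (1 + U r) - u1 r * u1 r) / (1 + U r) ^ 2) r := by
  rw [Phi_eq]
  exact (hasDerivAt_u1 r).div ((hasDerivAt_U r).const_add 1) (one_add_U_pos r).ne'

lemma Phi_cont : Continuous Phi := by
  have h : Differentiable ℝ Phi := fun r => (hasDerivAt_Phi r).differentiableAt
  exact h.continuous

lemma Phi_mono : StrictMonoOn Phi (Icc 0 (4/5)) := by
  apply strictMonoOn_of_deriv_pos (convex_Icc _ _) Phi_cont.continuousOn
  intro x hx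
  rw [interior_Icc] at hx
  obtain ⟨hx0, hx1⟩ := hx
  rw [(hasDerivAt_Phi x).deriv]
  apply div_pos _ (pow_pos (one_add_U_pos x) 2)
  have h2 : 1 / (25 * π) ≤ u2 x := u2_lower ⟨hx0.le, by linarith⟩
  have hπ : (0:ℝ) < π := Real.pi_pos
  have hu2U : 1 / (25 * π) ≤ u2 x * (1 + U x) := by
    calc 1 / (25 * π) = 1 / (25 * π) * 1 := by ring
      _ ≤ u2 x * (1 + U x) :=
        mul_le_mul h2 (by linarith [U_nonneg x]) (by norm_num)
          (le_trans (by positivity) h2)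
  have h1 : u1 x ≤ 4/5 * (2 / (15 * π)) := by
    calc u1 x ≤ x * (2 / (15 * π)) := u1_le_small hx0.le
      _ ≤ 4/5 * (2 / (15 * π)) := mul_le_mul_of_nonneg_right hx1.le (by positivity)
  have h1' : 0 ≤ u1 x := u1_nonneg hx0.le
  have hu1sq : u1 x * u1 x ≤ (4/5 * (2 / (15 * π))) * (4/5 * (2 / (15 * π))) :=
    mul_self_le_mul_self h1' h1
  have hkey : (4/5 * (2 / (15 * π))) * (4/5 * (2 / (15 * π))) < 1 / (25 * π) := by
    rw [show (4/5 * (2 / (15 * π))) * (4/5 * (2 / (15 * π))) = 64 / (5625 * π ^ 2) by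
      field_simp; ring]
    rw [div_lt_div_iff₀ (by positivity) (by positivity)]
    nlinarith [Real.pi_gt_three]
  linarith

lemma Phi_anti : StrictAntiOn Phi (Ici 5) := by
  apply strictAntiOn_of_deriv_neg (convex_Ici _) Phi_cont.continuousOn
  intro x hx
  rw [interior_Ici] at hx
  have hx5 : (5:ℝ) < x := hx
  rw [(hasDerivAt_Phi x).deriv]
  apply div_neg_of_neg_of_pos _ (pow_pos (one_add_U_pos x) 2)
  have h2 : u2 x < 0 := u2_neg hx5.le
  have h3 := mul_neg_of_neg_of_pos h2 (one_add_U_pos x)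
  have h4 : 0 < u1 x := u1_pos (by linarith)
  nlinarith

lemma Phi_tendsto : Filter.Tendsto Phi Filter.atTop (nhds 0) := by
  apply tendsto_of_tendsto_of_tendsto_of_le_of_le' (tendsto_const_nhds (x := (0:ℝ)))
    (g := fun _ => (0:ℝ)) (h := fun r => 4 / (3 * π * r))
  · exact Filter.Tendsto.div_atTop tendsto_const_nhds
      (Filter.Tendsto.const_mul_atTop (by positivity : (0:ℝ) < 3 * π) Filter.tendsto_id)
  · filter_upwards [Filter.eventually_ge_atTop (0:ℝ)] with r hr using Phi_nonneg hr
  · filter_upwards [Filter.eventually_gt_atTop (0:ℝ)] with r hr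
    have h1 : Phi r ≤ u1 r := by
      rw [Phi_eq]
      exact div_le_self (u1_nonneg hr.le) (by linarith [U_nonneg r])
    exact h1.trans (u1_le_large hr)

theorem Phi_diffeomorphism :
    ∃ Tm Tp Phi0 : ℝ, 0 < Tm ∧ Tm < Tp ∧ 0 < Phi0 ∧
      StrictMonoOn Phi (Ioo 0 Tm) ∧ Phi '' Ioo 0 Tm = Ioo 0 Phi0 ∧
      StrictAntiOn Phi (Ioi Tp) ∧ Phi '' Ioi Tp = Ioo 0 Phi0 ∧
      Phi ⁻¹' Ioo 0 Phi0 ∩ Ici (0:ℝ) = Ioo 0 Tm ∪ Ioi Tp := by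
  have hmono := Phi_mono
  have hanti := Phi_anti
  have htend := Phi_tendsto
  obtain ⟨c, hc, hcmin⟩ := (isCompact_Icc : IsCompact (Icc (4/5:ℝ) 5)).exists_isMinOn
    (nonempty_Icc.mpr (by norm_num)) Phi_cont.continuousOn
  set m := Phi c with hm
  have hm0 : 0 < m := Phi_pos (by linarith [hc.1])
  set Phi0 := m / 2 with hPhi0def
  have hPhi0 : 0 < Phi0 := by positivity
  have hPhi0m : Phi0 < m := by
    rw [hPhi0def]; linarith
  have hmin := isMinOn_iff.mp hcmin
  -- Tm
  have h45 : Phi0 < Phi (4/5) := lt_of_lt_of_le hPhi0m (hmin _ ⟨le_refl _, by norm_num⟩)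
  obtain ⟨Tm, hTmmem, hTmval⟩ := intermediate_value_Ioo (by norm_num : (0:ℝ) ≤ 4/5)
    Phi_cont.continuousOn (show Phi0 ∈ Ioo (Phi 0) (Phi (4/5)) by
      rw [Phi_zero]; exact ⟨hPhi0, h45⟩)
  -- Tp
  have hPhi5 : Phi0 < Phi 5 := lt_of_lt_of_le hPhi0m (hmin _ ⟨by norm_num, le_refl _⟩)
  obtain ⟨R2, hR2⟩ := ((Filter.eventually_ge_atTop (6:ℝ)).and
    (htend.eventually_lt_const hPhi0)).exists
  obtain ⟨hR2ge, hR2val⟩ := hR2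
  obtain ⟨Tp, hTpmem, hTpval⟩ := intermediate_value_Ioo' (by linarith : (5:ℝ) ≤ R2)
    Phi_cont.continuousOn (show Phi0 ∈ Ioo (Phi R2) (Phi 5) from ⟨hR2val, hPhi5⟩)
  have hTmIcc : Tm ∈ Icc (0:ℝ) (4/5) := ⟨hTmmem.1.le, hTmmem.2.le⟩
  have hTp5 : (5:ℝ) < Tp := hTpmem.1
  refine ⟨Tm, Tp, Phi0, hTmmem.1, by linarith [hTmmem.2], hPhi0, ?_, ?_, ?_, ?_, ?_⟩
  · exact hmono.mono (fun x hx => ⟨hx.1.le, by linarith [hx.2, hTmmem.2]⟩)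
  · apply Subset.antisymm
    · rintro y ⟨x, hx, rfl⟩
      refine ⟨Phi_pos hx.1, ?_⟩
      rw [← hTmval]
      exact hmono ⟨hx.1.le, by linarith [hx.2, hTmmem.2]⟩ hTmIcc hx.2
    · have hsub := intermediate_value_Ioo hTmmem.1.le Phi_cont.continuousOn (f := Phi)
      rw [Phi_zero, hTmval] at hsub
      exact hsub
  · exact hanti.mono (fun x hx => le_of_lt (lt_trans hTp5 hx))
  · apply Subset.antisymm
    · rintro y ⟨x, hx, rfl⟩
      have hx5 : (5:ℝ) < x := lt_trans hTp5 hx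
      refine ⟨Phi_pos (by linarith), ?_⟩
      rw [← hTpval]
      exact hanti hTp5.le hx5.le hx
    · intro y hy
      obtain ⟨X, hXge, hXval⟩ := ((Filter.eventually_ge_atTop (Tp + 1)).and
        (htend.eventually_lt_const hy.1)).exists
      have hsub := intermediate_value_Ioo' (by linarith : Tp ≤ X) Phi_cont.continuousOn (f := Phi)
      obtain ⟨x, hxmem, hxval⟩ := hsub (show y ∈ Ioo (Phi X) (Phi Tp) from
        ⟨hXval, by rw [hTpval]; exact hy.2⟩)
      exact ⟨x, hxmem.1, hxval⟩
  · ext x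
    simp only [mem_inter_iff, mem_preimage, mem_Ioo, mem_Ici, mem_union, mem_Ioi]
    constructor
    · rintro ⟨⟨hy1, hy2⟩, hx0⟩
      rcases eq_or_lt_of_le hx0 with heq | hx0'
      · exfalso
        rw [← heq, Phi_zero] at hy1
        exact lt_irrefl 0 hy1
      by_contra hcon
      push_neg at hcon
      obtain ⟨hcon1, hcon2⟩ := hcon
      have hTm_le : Tm ≤ x := hcon1 hx0'
      rcases le_or_gt x (4/5) with hc1 | hc1
      · have := hmono.monotoneOn hTmIcc ⟨hx0, hc1⟩ hTm_le
        rw [hTmval] at this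
        linarith
      rcases le_or_gt x 5 with hc2 | hc2
      · have := hmin x ⟨hc1.le, hc2⟩
        linarith
      · have := hanti.antitoneOn (show x ∈ Ici (5:ℝ) from hc2.le)
          (show Tp ∈ Ici (5:ℝ) from hTp5.le) hcon2
        rw [hTpval] at this
        linarith
    · rintro (⟨h1, h2⟩ | h1)
      · refine ⟨⟨Phi_pos h1, ?_⟩, h1.le⟩
        rw [← hTmval]
        exact hmono ⟨h1.le, by linarith [hTmmem.2]⟩ hTmIcc h2
      · have h5x : (5:ℝ) < x := lt_trans hTp5 h1
        refine ⟨⟨Phi_pos (by linarith), ?_⟩, by linarith⟩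
        rw [← hTpval]
        exact hanti hTp5.le h5x.le h1
end
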